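/- arXiv:1209.3221 — 4 statements merged into one kernel-verified Lean document; each statement's English description precedes it below -/
import Mathlib

section
/- Let γ : ℝ → ℝ³ be smooth (C^∞) with ‖γ'(s)‖ = 1 for all s ∈ [a,b] (a < b). Then there exist vector fields U, V : ℝ → ℝ³, smooth on [a,b], such that for every s ∈ [a,b]: ‖U(s)‖ = 1, ‖V(s)‖ = 1, ⟨U(s), V(s)⟩ = 0, ⟨U(s), γ'(s)⟩ = 0, ⟨V(s), γ'(s)⟩ = 0, and the cross product satisfies U(s) × V(s) = γ'(s); i.e., {U(s), V(s), γ'(s)} is a smooth right-handed orthonormal frame along the curve. -/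
set_option maxHeartbeats 1000000


open MeasureTheory Topology Filter Metric Set Real
open scoped RealInnerProductSpace

/-- **Smooth right-handed orthonormal frame along a curve.** For a smooth curve
`γ : ℝ → ℝ³` parametrized by arc length on `[a,b]`, there exist unit vector fields
`U, V`, smooth on `[a,b]`, such that `{U(s), V(s), γ'(s)}` is a right-handed
orthonormal frame for every `s ∈ [a,b]`: pairwise orthogonal unit vectors with
`U(s) × V(s) = γ'(s)`. -/
theorem exists_smooth_orthonormal_frame
    (a b : ℝ) (hab : a < b)
    (γ : ℝ → EuclideanSpace ℝ (Fin 3))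
    (hγ_smooth : ContDiff ℝ (⊤ : ℕ∞) γ)
    (hγ_arc : ∀ s ∈ Set.Icc a b, ‖deriv γ s‖ = 1) :
    ∃ U V : ℝ → EuclideanSpace ℝ (Fin 3),
      ContDiffOn ℝ (⊤ : ℕ∞) U (Set.Icc a b) ∧ ContDiffOn ℝ (⊤ : ℕ∞) V (Set.Icc a b) ∧
      ∀ s ∈ Set.Icc a b,
        ‖U s‖ = 1 ∧ ‖V s‖ = 1 ∧
        ⟪U s, V s⟫ = 0 ∧ ⟪U s, deriv γ s⟫ = 0 ∧ ⟪V s, deriv γ s⟫ = 0 ∧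
        crossProduct (U s) (V s) = deriv γ s := by
  set T : ℝ → EuclideanSpace ℝ (Fin 3) := deriv γ with hT_def
  have hT : ContDiff ℝ (⊤ : ℕ∞) T := by
    have h1 : ContDiff ℝ (⊤ : ℕ∞) (fderiv ℝ γ) := hγ_smooth.fderiv_right (by simp)
    exact h1.clm_apply contDiff_const
  -- find a vector `p` not in the "tangent cone" `{t • T s}`
  have hf : ContDiff ℝ 1 (fun q : ℝ × ℝ => q.1 • T q.2) :=
    (contDiff_fst.smul ((hT.of_le (by simp)).comp contDiff_snd))
  have hdim : Module.finrank ℝ (ℝ × ℝ) < Module.finrank ℝ (EuclideanSpace ℝ (Fin 3)) := by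
    simp [finrank_euclideanSpace_fin]
  obtain ⟨p, hp⟩ := (hf.dense_compl_range_of_finrank_lt_finrank hdim).nonempty
  have hp' : ∀ (t s : ℝ), p ≠ t • T s := fun t s h => hp ⟨(t, s), h.symm⟩
  -- the Gram–Schmidt vector
  set w : ℝ → EuclideanSpace ℝ (Fin 3) := fun s => p - ⟪T s, p⟫ • T s with hw_def
  have hw_smooth : ContDiff ℝ (⊤ : ℕ∞) w :=
    contDiff_const.sub ((hT.inner ℝ contDiff_const).smul hT)
  have hw_ne : ∀ s, w s ≠ 0 := by
    intro s h
    exact hp' ⟪T s, p⟫ s (sub_eq_zero.mp h)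
  set U : ℝ → EuclideanSpace ℝ (Fin 3) := fun s => (‖w s‖)⁻¹ • w s with hU_def
  have hU_smoothAt : ∀ s, ContDiffAt ℝ (⊤ : ℕ∞) U s := by
    intro s
    exact ((hw_smooth.contDiffAt.norm ℝ (hw_ne s)).inv
      (norm_ne_zero_iff.mpr (hw_ne s))).smul hw_smooth.contDiffAt
  set V : ℝ → EuclideanSpace ℝ (Fin 3) := fun s => WithLp.toLp 2 (crossProduct (T s) (U s)) with hV_def
  have hU_smooth : ContDiffOn ℝ (⊤ : ℕ∞) U (Set.Icc a b) := fun s _ =>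
    (hU_smoothAt s).contDiffWithinAt
  have hV_smooth : ContDiffOn ℝ (⊤ : ℕ∞) V (Set.Icc a b) := by
    intro s hs
    apply ContDiffAt.contDiffWithinAt
    rw [contDiffAt_euclidean]
    intro i
    have hTc : ∀ j, ContDiffAt ℝ (⊤ : ℕ∞) (fun s => T s j) s := by
      intro j
      exact (contDiff_euclidean.mp hT j).contDiffAt
    have hUc : ∀ j, ContDiffAt ℝ (⊤ : ℕ∞) (fun s => U s j) s := by
      intro j
      exact contDiffAt_euclidean.mp (hU_smoothAt s) j
    fin_cases i <;>
      simp only [hV_def, cross_apply, Matrix.cons_val_zero, Matrix.cons_val_one,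
        Matrix.head_cons, Matrix.cons_val_two, Matrix.tail_cons] <;>
      exact ((hTc _).mul (hUc _)).sub ((hTc _).mul (hUc _))
  refine ⟨U, V, hU_smooth, hV_smooth, ?_⟩
  intro s hs
  -- basic facts
  have hwn : ‖w s‖ ≠ 0 := norm_ne_zero_iff.mpr (hw_ne s)
  have hU_norm : ‖U s‖ = 1 := by
    rw [hU_def]
    simp only [norm_smul, norm_inv, norm_norm]
    field_simp
  have hT_norm : ‖T s‖ = 1 := hγ_arc s hs
  have hwT : ⟪w s, T s⟫ = 0 := by
    have htt : ⟪T s, T s⟫ = 1 := by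
      rw [real_inner_self_eq_norm_mul_norm, hT_norm]; ring
    rw [hw_def]
    simp only [inner_sub_left, real_inner_smul_left, htt]
    rw [real_inner_comm]
    ring
  have hUT : ⟪U s, T s⟫ = 0 := by
    rw [hU_def]
    simp only [real_inner_smul_left, hwT, mul_zero]
  -- coordinate versions
  have htt : ⟪T s, T s⟫ = 1 := by
    rw [real_inner_self_eq_norm_mul_norm, hT_norm]; ring
  have huu : ⟪U s, U s⟫ = 1 := by
    rw [real_inner_self_eq_norm_mul_norm, hU_norm]; ring
  set t : EuclideanSpace ℝ (Fin 3) := T s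
  set u : EuclideanSpace ℝ (Fin 3) := U s
  have htt' : t 0 * t 0 + t 1 * t 1 + t 2 * t 2 = 1 := by
    have := htt
    simp only [PiLp.inner_apply, RCLike.inner_apply, Fin.sum_univ_three, conj_trivial] at this
    linarith
  have huu' : u 0 * u 0 + u 1 * u 1 + u 2 * u 2 = 1 := by
    have := huu
    simp only [PiLp.inner_apply, RCLike.inner_apply, Fin.sum_univ_three, conj_trivial] at this
    linarith
  have hut' : u 0 * t 0 + u 1 * t 1 + u 2 * t 2 = 0 := by
    have := hUT
    simp only [PiLp.inner_apply, RCLike.inner_apply, Fin.sum_univ_three, conj_trivial] at this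
    linarith
  have hVs : V s = WithLp.toLp 2 (crossProduct t u) := rfl
  have hV_norm : ‖V s‖ = 1 := by
    have hvv : ⟪V s, V s⟫ = 1 := by
      rw [hVs]
      simp only [PiLp.inner_apply, RCLike.inner_apply, Fin.sum_univ_three, conj_trivial,
        cross_apply, Matrix.cons_val_zero, Matrix.cons_val_one, Matrix.head_cons,
        Matrix.cons_val_two, Matrix.tail_cons]
      nlinarith [htt', huu', hut']
    have := real_inner_self_eq_norm_mul_norm (V s)
    nlinarith [norm_nonneg (V s)]
  refine ⟨hU_norm, hV_norm, ?_, hUT, ?_, ?_⟩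
  · rw [hVs]
    simp only [PiLp.inner_apply, RCLike.inner_apply, Fin.sum_univ_three, conj_trivial,
      cross_apply, Matrix.cons_val_zero, Matrix.cons_val_one, Matrix.head_cons,
      Matrix.cons_val_two, Matrix.tail_cons]
    ring
  · rw [hVs]
    simp only [PiLp.inner_apply, RCLike.inner_apply, Fin.sum_univ_three, conj_trivial,
      cross_apply, Matrix.cons_val_zero, Matrix.cons_val_one, Matrix.head_cons,
      Matrix.cons_val_two, Matrix.tail_cons]
    ring
  · rw [hVs]
    show crossProduct u (crossProduct t u) = t
    have key : ∀ i : Fin 3, (crossProduct u (crossProduct t u)) i = t i := by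
      intro i
      fin_cases i <;>
        simp [cross_apply]
      · linear_combination t 0 * huu' - u 0 * hut'
      · linear_combination t 1 * huu' - u 1 * hut'
      · linear_combination t 2 * huu' - u 2 * hut'
    funext i
    exact key i
end

section
/- Let γ : [a,b] → ℝ³ (a < b) be a smooth (C^∞) injective curve parametrized by arc length (‖γ'(s)‖ = 1 for all s ∈ [a,b]). Then there exists ε > 0 such that for all s₁, s₂ ∈ [a,b] and all z₁, z₂ ∈ ℝ³ with ⟨z₁, γ'(s₁)⟩ = 0, ⟨z₂, γ'(s₂)⟩ = 0, ‖z₁‖ < ε and ‖z₂‖ < ε, the equality γ(s₁) + z₁ = γ(s₂) + z₂ implies s₁ = s₂ and z₁ = z₂. (Injectivity part of the tubular neighbourhood Lemma 1.) -/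
open MeasureTheory Topology Filter Metric Set Real
open scoped RealInnerProductSpace

set_option maxHeartbeats 1600000

/-- **Injectivity part of the tubular neighbourhood Lemma 1.** For a simple smooth
curve `γ : [a,b] → ℝ³` parametrized by arc length, there is `ε > 0` such that points
of the form `γ(s) + z` with `z` normal to the curve at `γ(s)` and `‖z‖ < ε` are
uniquely decomposed: `γ(s₁) + z₁ = γ(s₂) + z₂` forces `s₁ = s₂` and `z₁ = z₂`. -/
theorem tubular_neighbourhood_injectivity
    (a b : ℝ) (hab : a < b)
    (γ : ℝ → EuclideanSpace ℝ (Fin 3))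
    (hγ_smooth : ContDiffOn ℝ (⊤ : ℕ∞) γ (Set.Icc a b))
    (hγ_inj : Set.InjOn γ (Set.Icc a b))
    (hγ_arc : ∀ s ∈ Set.Icc a b, ‖derivWithin γ (Set.Icc a b) s‖ = 1) :
    ∃ ε > 0, ∀ s₁ ∈ Set.Icc a b, ∀ s₂ ∈ Set.Icc a b,
      ∀ z₁ z₂ : EuclideanSpace ℝ (Fin 3),
        ⟪z₁, derivWithin γ (Set.Icc a b) s₁⟫ = 0 →
        ⟪z₂, derivWithin γ (Set.Icc a b) s₂⟫ = 0 →
        ‖z₁‖ < ε → ‖z₂‖ < ε →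
        γ s₁ + z₁ = γ s₂ + z₂ → s₁ = s₂ ∧ z₁ = z₂ := by
  set I := Set.Icc a b with hI
  set γ' := derivWithin γ I with hγ'
  have hU : UniqueDiffOn ℝ I := uniqueDiffOn_Icc hab
  have hcompact : IsCompact I := isCompact_Icc
  have hconv : Convex ℝ I := convex_Icc a b
  have h2 : ContDiffOn ℝ 2 γ I := hγ_smooth.of_le (WithTop.coe_le_coe.mpr le_top)
  have hd : DifferentiableOn ℝ γ I := h2.differentiableOn (by norm_num)
  have hdγ : ∀ x ∈ I, HasDerivWithinAt γ (γ' x) I x :=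
    fun x hx => (hd x hx).hasDerivWithinAt
  have hγ'cd : ContDiffOn ℝ 1 γ' I := h2.derivWithin hU (by norm_num)
  have hγ'd : DifferentiableOn ℝ γ' I := hγ'cd.differentiableOn one_ne_zero
  have hγ''cont : ContinuousOn (derivWithin γ' I) I :=
    hγ'cd.continuousOn_derivWithin hU le_rfl
  -- bound on second derivative
  obtain ⟨C, hC⟩ : ∃ C, ∀ x ∈ I, ‖derivWithin γ' I x‖ ≤ C :=
    hcompact.exists_bound_of_continuousOn hγ''cont
  set L : ℝ := max C 1 with hL
  have hL1 : (1 : ℝ) ≤ L := le_max_right _ _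
  have hL0 : (0 : ℝ) < L := lt_of_lt_of_le one_pos hL1
  -- Lipschitz bound for γ'
  have hLip : ∀ x ∈ I, ∀ y ∈ I, ‖γ' y - γ' x‖ ≤ L * |y - x| := by
    intro x hx y hy
    have := hconv.norm_image_sub_le_of_norm_derivWithin_le hγ'd
      (fun z hz => le_trans (hC z hz) (le_max_left C 1)) hx hy
    simpa [Real.norm_eq_abs] using this
  -- Taylor estimate
  have hTaylor : ∀ s₁ ∈ I, ∀ s₂ ∈ I,
      ‖γ s₂ - γ s₁ - (s₂ - s₁) • γ' s₁‖ ≤ (L * |s₂ - s₁|) * |s₂ - s₁| := by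
    intro s₁ h₁ s₂ h₂
    set J := Set.Icc (min s₁ s₂) (max s₁ s₂) with hJ
    have hJI : J ⊆ I := by
      intro x hx
      constructor
      · exact le_trans (le_min h₁.1 h₂.1) hx.1
      · exact le_trans hx.2 (max_le h₁.2 h₂.2)
    have h₁J : s₁ ∈ J := ⟨min_le_left _ _, le_max_left _ _⟩
    have h₂J : s₂ ∈ J := ⟨min_le_right _ _, le_max_right _ _⟩
    set g : ℝ → EuclideanSpace ℝ (Fin 3) := fun x => γ x - x • γ' s₁ with hg
    have hgd : ∀ x ∈ J, HasDerivWithinAt g (γ' x - γ' s₁) J x := by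
      intro x hx
      have h1 : HasDerivWithinAt γ (γ' x) J x := (hdγ x (hJI hx)).mono hJI
      have hsm : HasDerivAt (fun y : ℝ => y • γ' s₁) (γ' s₁) x := by
        simpa using (hasDerivAt_id x).smul_const (γ' s₁)
      exact h1.sub hsm.hasDerivWithinAt
    have hbound : ∀ x ∈ J, ‖γ' x - γ' s₁‖ ≤ L * |s₂ - s₁| := by
      intro x hx
      refine le_trans (hLip s₁ h₁ x (hJI hx)) ?_
      have hmin : min s₁ s₂ ≤ x := hx.1
      have hmax : x ≤ max s₁ s₂ := hx.2
      have : |x - s₁| ≤ |s₂ - s₁| := by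
        rcases le_total s₁ s₂ with h | h
        · have hxl : s₁ ≤ x := by simpa [min_eq_left h] using hmin
          have hxr : x ≤ s₂ := by simpa [max_eq_right h] using hmax
          rw [abs_of_nonneg (by linarith : (0:ℝ) ≤ x - s₁),
            abs_of_nonneg (by linarith : (0:ℝ) ≤ s₂ - s₁)]
          linarith
        · have hxl : s₂ ≤ x := by simpa [min_eq_right h] using hmin
          have hxr : x ≤ s₁ := by simpa [max_eq_left h] using hmax
          rw [abs_of_nonpos (by linarith : x - s₁ ≤ (0:ℝ)),
            abs_of_nonpos (by linarith : s₂ - s₁ ≤ (0:ℝ))]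
          linarith
      nlinarith
    have := (convex_Icc _ _).norm_image_sub_le_of_norm_hasDerivWithin_le hgd hbound h₁J h₂J
    have heq : g s₂ - g s₁ = γ s₂ - γ s₁ - (s₂ - s₁) • γ' s₁ := by
      simp only [hg, sub_smul]
      abel
    rw [heq] at this
    simpa [Real.norm_eq_abs] using this
  -- separation for far-apart parameters
  have hfar : ∃ c > 0, ∀ s ∈ I, ∀ t ∈ I, 1 / (4 * L) ≤ |s - t| → c ≤ ‖γ s - γ t‖ := by
    set δ := 1 / (4 * L) with hδdef
    have hδ0 : 0 < δ := by positivity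
    set K : Set (ℝ × ℝ) := (I ×ˢ I) ∩ {p | δ ≤ |p.1 - p.2|} with hK
    have hKc : IsCompact K := by
      apply (hcompact.prod hcompact).inter_right
      have : Continuous fun p : ℝ × ℝ => |p.1 - p.2| := (continuous_fst.sub continuous_snd).abs
      exact isClosed_Ici.preimage this
    rcases eq_empty_or_nonempty K with hKe | hKne
    · refine ⟨1, one_pos, fun s hs t ht hst => ?_⟩
      exact absurd (show (s, t) ∈ K from ⟨⟨hs, ht⟩, hst⟩) (by simp [hKe])
    · have hγc : ContinuousOn γ I := hγ_smooth.continuousOn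
      have hf : ContinuousOn (fun p : ℝ × ℝ => ‖γ p.1 - γ p.2‖) K := by
        apply ContinuousOn.norm
        apply ContinuousOn.sub
        · exact hγc.comp continuous_fst.continuousOn fun p hp => hp.1.1
        · exact hγc.comp continuous_snd.continuousOn fun p hp => hp.1.2
      obtain ⟨p₀, hp₀K, hp₀min⟩ := hKc.exists_isMinOn hKne hf
      rw [isMinOn_iff] at hp₀min
      refine ⟨‖γ p₀.1 - γ p₀.2‖, ?_, fun s hs t ht hst => ?_⟩
      swap
      · have hmem : (s, t) ∈ K := Set.mem_inter (Set.mk_mem_prod hs ht) hst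
        simpa using hp₀min (s, t) hmem
      rw [gt_iff_lt, norm_pos_iff, sub_ne_zero]
      intro hcontra
      have hne : p₀.1 ≠ p₀.2 := by
        intro h
        have hge : δ ≤ |p₀.1 - p₀.2| := hp₀K.2
        rw [h, sub_self, abs_zero] at hge
        linarith
      exact hne (hγ_inj hp₀K.1.1 hp₀K.1.2 hcontra)
  obtain ⟨c, hc0, hcfar⟩ := hfar
  refine ⟨min (c / 2) (1 / (2 * L)), by positivity, ?_⟩
  intro s₁ h₁ s₂ h₂ z₁ z₂ hz₁ hz₂ hn₁ hn₂ heq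
  have hεc : min (c / 2) (1 / (2 * L)) ≤ c / 2 := min_le_left _ _
  have hεL : min (c / 2) (1 / (2 * L)) ≤ 1 / (2 * L) := min_le_right _ _
  have hdiff : γ s₂ - γ s₁ = z₁ - z₂ := by
    rw [sub_eq_sub_iff_add_eq_add, ← heq]
    exact add_comm _ _
  -- parameters are close
  have hclose : |s₂ - s₁| < 1 / (4 * L) := by
    by_contra hcon
    push_neg at hcon
    have h1 : c ≤ ‖γ s₂ - γ s₁‖ := hcfar s₂ h₂ s₁ h₁ hcon
    have h2 : ‖γ s₂ - γ s₁‖ ≤ ‖z₁‖ + ‖z₂‖ := by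
      rw [hdiff]; exact norm_sub_le _ _
    linarith [lt_of_lt_of_le hn₁ hεc, lt_of_lt_of_le hn₂ hεc]
  -- main estimate forcing s₁ = s₂
  set v := γ' s₁ with hv
  have hv1 : ‖v‖ = 1 := hγ_arc s₁ h₁
  set D := |s₂ - s₁| with hD
  set R : EuclideanSpace ℝ (Fin 3) := γ s₂ - γ s₁ - (s₂ - s₁) • v with hR
  have hRnorm : ‖R‖ ≤ (L * D) * D := hTaylor s₁ h₁ s₂ h₂
  have hsplit : γ s₂ - γ s₁ = (s₂ - s₁) • v + R := by rw [hR]; abel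
  have hinner1 : ⟪γ s₂ - γ s₁, v⟫ = (s₂ - s₁) + ⟪R, v⟫ := by
    rw [hsplit, inner_add_left, real_inner_smul_left,
      real_inner_self_eq_norm_sq, hv1]
    ring
  have hinner2 : ⟪γ s₂ - γ s₁, v⟫ = ⟪z₂, γ' s₂ - v⟫ := by
    rw [hdiff, inner_sub_left, hz₁, inner_sub_right, hz₂]
  have habs : D ≤ ‖z₂‖ * ‖γ' s₂ - v‖ + ‖R‖ := by
    have h1 : s₂ - s₁ = ⟪z₂, γ' s₂ - v⟫ - ⟪R, v⟫ := by
      rw [← hinner2, hinner1]; ring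
    calc D = |s₂ - s₁| := rfl
      _ = |⟪z₂, γ' s₂ - v⟫ - ⟪R, v⟫| := by rw [h1]
      _ ≤ |⟪z₂, γ' s₂ - v⟫| + |⟪R, v⟫| := abs_sub _ _
      _ ≤ ‖z₂‖ * ‖γ' s₂ - v‖ + ‖R‖ * ‖v‖ :=
          add_le_add (abs_real_inner_le_norm _ _) (abs_real_inner_le_norm _ _)
      _ = ‖z₂‖ * ‖γ' s₂ - v‖ + ‖R‖ := by rw [hv1, mul_one]
  have hLipv : ‖γ' s₂ - v‖ ≤ L * D := hLip s₁ h₁ s₂ h₂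
  have hz₂small : ‖z₂‖ ≤ 1 / (2 * L) := le_of_lt (lt_of_lt_of_le hn₂ hεL)
  have hDsmall : D ≤ 1 / (4 * L) := le_of_lt hclose
  have hD0 : 0 ≤ D := abs_nonneg _
  have hz0 : 0 ≤ ‖z₂‖ := norm_nonneg _
  have hs12 : s₁ = s₂ := by
    have key : D ≤ (1 / (2 * L)) * (L * D) + (L * D) * D := by
      calc D ≤ ‖z₂‖ * ‖γ' s₂ - v‖ + ‖R‖ := habs
        _ ≤ (1 / (2 * L)) * (L * D) + (L * D) * D := by
            apply add_le_add _ hRnorm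
            apply mul_le_mul hz₂small hLipv (norm_nonneg _) (by positivity)
    have hLD : L * D ≤ 1 / 4 := by
      rw [le_div_iff₀ (by positivity : (0:ℝ) < 4 * L)] at hDsmall
      nlinarith
    have : D ≤ (1/2) * D + (1/4) * D := by
      have e1 : (1 / (2 * L)) * (L * D) = (1/2) * D := by field_simp
      rw [e1] at key
      nlinarith
    have : D = 0 := by linarith
    have := abs_eq_zero.mp this
    linarith
  refine ⟨hs12, ?_⟩
  rw [hs12] at heq
  exact add_left_cancel heq
end

section
/- Let γ : [a,b] → ℝ³ (a < b) be a smooth (C^∞) injective curve parametrized by arc length (‖γ'(s)‖ = 1 for all s ∈ [a,b]) and let Σ = γ([a,b]). Then there exists ε > 0 such that for every s ∈ [a,b] and every z ∈ ℝ³ with ⟨z, γ'(s)⟩ = 0 and ‖z‖ < ε, one has infDist(γ(s) + z, Σ) = ‖z‖; i.e., inside the tubular neighbourhood the distance to the curve of a point on the normal plane at γ(s) equals the length of its normal component. (Remark 1.) -/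
open MeasureTheory Topology Filter Metric Set Real
open scoped RealInnerProductSpace

set_option maxHeartbeats 1000000 in
/-- **Remark 1.** For a simple smooth curve `γ : [a,b] → ℝ³` parametrized by arc
length with image `Σ`, there is `ε > 0` such that for every `s ∈ [a,b]` and every
vector `z` normal to the curve at `γ(s)` with `‖z‖ < ε`, the distance from
`γ(s) + z` to `Σ` equals `‖z‖`. -/
theorem dist_to_curve_eq_norm_normal_component
    (a b : ℝ) (hab : a < b)
    (γ : ℝ → EuclideanSpace ℝ (Fin 3))
    (hγ_smooth : ContDiffOn ℝ (⊤ : ℕ∞) γ (Set.Icc a b))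
    (hγ_inj : Set.InjOn γ (Set.Icc a b))
    (hγ_arc : ∀ s ∈ Set.Icc a b, ‖derivWithin γ (Set.Icc a b) s‖ = 1)
    (S : Set (EuclideanSpace ℝ (Fin 3))) (hS : S = γ '' Set.Icc a b) :
    ∃ ε > 0, ∀ s ∈ Set.Icc a b, ∀ z : EuclideanSpace ℝ (Fin 3),
      ⟪z, derivWithin γ (Set.Icc a b) s⟫ = 0 → ‖z‖ < ε →
      Metric.infDist (γ s + z) S = ‖z‖ := by
  set I := Set.Icc a b with hIdef
  have hIconv : Convex ℝ I := convex_Icc a b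
  have hIcomp : IsCompact I := isCompact_Icc
  have hIu : UniqueDiffOn ℝ I := uniqueDiffOn_Icc hab
  set γ' := derivWithin γ I with hγ'def
  have hγcont : ContinuousOn γ I := hγ_smooth.continuousOn
  have hγdiff : DifferentiableOn ℝ γ I := hγ_smooth.differentiableOn (by simp)
  have hγ'cd : ContDiffOn ℝ (⊤ : ℕ∞) γ' I := hγ_smooth.derivWithin hIu (by simp)
  have hγ'diff : DifferentiableOn ℝ γ' I := hγ'cd.differentiableOn (by simp)
  -- bound on the second derivative
  obtain ⟨K₀, hK₀⟩ : ∃ K₀, ∀ u ∈ I, ‖derivWithin γ' I u‖ ≤ K₀ :=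
    hIcomp.exists_bound_of_continuousOn (hγ'cd.derivWithin (m := (⊤ : ℕ∞)) hIu (by simp)).continuousOn
  set K : ℝ := max K₀ 1 with hKdef
  have hK1 : (1 : ℝ) ≤ K := le_max_right _ _
  have hKpos : (0 : ℝ) < K := lt_of_lt_of_le one_pos hK1
  -- γ' is K-Lipschitz on I
  have hLip : ∀ u ∈ I, ∀ v ∈ I, ‖γ' v - γ' u‖ ≤ K * |v - u| := by
    intro u hu v hv
    have := hIconv.norm_image_sub_le_of_norm_derivWithin_le hγ'diff
      (fun x hx => (hK₀ x hx).trans (le_max_left K₀ 1)) hu hv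
    simpa [Real.norm_eq_abs] using this
  -- Taylor estimate
  have hTay : ∀ s ∈ I, ∀ t ∈ I, ‖γ t - γ s - (t - s) • γ' s‖ ≤ K * (t - s) ^ 2 := by
    intro s hs t ht
    have hsub : Set.uIcc s t ⊆ I := Set.uIcc_subset_Icc hs ht
    have habs : ∀ u ∈ Set.uIcc s t, |u - s| ≤ |t - s| := by
      intro u hu
      rw [Set.mem_uIcc] at hu
      rcases hu with ⟨h1, h2⟩ | ⟨h1, h2⟩
      · rw [abs_of_nonneg (by linarith), abs_of_nonneg (by linarith)]; linarith
      · rw [abs_of_nonpos (by linarith), abs_of_nonpos (by linarith)]; linarith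
    have hder : ∀ u ∈ Set.uIcc s t,
        HasDerivWithinAt (fun u => γ u - u • γ' s) (γ' u - γ' s) (Set.uIcc s t) u := by
      intro u hu
      have h1 : HasDerivWithinAt γ (γ' u) (Set.uIcc s t) u :=
        ((hγdiff u (hsub hu)).hasDerivWithinAt).mono hsub
      have h2 : HasDerivWithinAt (fun u : ℝ => u • γ' s) (γ' s) (Set.uIcc s t) u := by
        simpa using ((hasDerivAt_id u).smul_const (γ' s)).hasDerivWithinAt
      exact h1.sub h2
    have hbd : ∀ u ∈ Set.uIcc s t, ‖γ' u - γ' s‖ ≤ K * |t - s| := by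
      intro u hu
      exact (hLip s hs u (hsub hu)).trans
        (mul_le_mul_of_nonneg_left (habs u hu) hKpos.le)
    have := (convex_uIcc s t).norm_image_sub_le_of_norm_hasDerivWithin_le hder hbd
      (Set.left_mem_uIcc) (Set.right_mem_uIcc)
    have heq : (γ t - t • γ' s) - (γ s - s • γ' s) = γ t - γ s - (t - s) • γ' s := by
      rw [sub_smul]; abel
    calc ‖γ t - γ s - (t - s) • γ' s‖ = ‖(γ t - t • γ' s) - (γ s - s • γ' s)‖ := by rw [heq]
      _ ≤ K * |t - s| * ‖t - s‖ := this
      _ = K * (t - s) ^ 2 := by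
          rw [Real.norm_eq_abs, mul_assoc, ← abs_mul, ← sq, abs_sq]
  -- local lower bound
  have hlow : ∀ s ∈ I, ∀ t ∈ I, |t - s| ≤ 1 / (2 * K) → |t - s| / 2 ≤ ‖γ t - γ s‖ := by
    intro s hs t ht hclose
    have h1 : ‖(t - s) • γ' s‖ - ‖γ t - γ s‖ ≤ ‖γ t - γ s - (t - s) • γ' s‖ := by
      have := norm_sub_norm_le ((t - s) • γ' s) (γ t - γ s)
      rw [← norm_neg ((t - s) • γ' s - (γ t - γ s))] at this
      simpa [neg_sub] using this
    have h2 : ‖(t - s) • γ' s‖ = |t - s| := by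
      rw [norm_smul, Real.norm_eq_abs, hγ_arc s hs, mul_one]
    have h3 := hTay s hs t ht
    have h4 : K * (t - s) ^ 2 ≤ |t - s| / 2 := by
      have : (t - s) ^ 2 = |t - s| * |t - s| := by rw [← abs_mul, ← sq, abs_sq]
      rw [this]
      have habs : (0:ℝ) ≤ |t - s| := abs_nonneg _
      have hKd : K * |t - s| ≤ 1 / 2 := by
        have h := mul_le_mul_of_nonneg_left hclose hKpos.le
        have heq : K * (1 / (2 * K)) = 1 / 2 := by
          field_simp
        linarith [heq ▸ h]
      calc K * (|t - s| * |t - s|) = (K * |t - s|) * |t - s| := by ring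
        _ ≤ (1 / 2) * |t - s| := mul_le_mul_of_nonneg_right hKd habs
        _ = |t - s| / 2 := by ring
    rw [h2] at h1
    linarith [h1, h3, h4]
  -- global separation
  obtain ⟨m, hmpos, hm⟩ : ∃ m > 0, ∀ s ∈ I, ∀ t ∈ I,
      1 / (2 * K) ≤ |t - s| → m ≤ ‖γ t - γ s‖ := by
    set T : Set (ℝ × ℝ) := {p | p.1 ∈ I ∧ p.2 ∈ I ∧ 1 / (2 * K) ≤ |p.2 - p.1|} with hT
    have hTsub : T ⊆ I ×ˢ I := fun p hp => ⟨hp.1, hp.2.1⟩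
    have hTclosed : IsClosed T := by
      have : T = (I ×ˢ I) ∩ {p : ℝ × ℝ | 1 / (2 * K) ≤ |p.2 - p.1|} := by
        ext p; simp [hT, Set.mem_prod, and_assoc]
      rw [this]
      exact ((isClosed_Icc.prod isClosed_Icc)).inter
        (isClosed_le continuous_const ((continuous_snd.sub continuous_fst).abs))
    have hTcomp : IsCompact T := (hIcomp.prod hIcomp).of_isClosed_subset hTclosed hTsub
    rcases T.eq_empty_or_nonempty with hTe | hTne
    · refine ⟨1, one_pos, fun s hs t ht hfar => ?_⟩
      have hmemT : (s, t) ∈ T := ⟨hs, ht, hfar⟩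
      rw [hTe] at hmemT
      exact absurd hmemT (Set.notMem_empty _)
    · have hcont : ContinuousOn (fun p : ℝ × ℝ => ‖γ p.2 - γ p.1‖) T := by
        have c2 : ContinuousOn (fun p : ℝ × ℝ => γ p.2) T :=
          hγcont.comp continuousOn_snd (fun p hp => hp.2.1)
        have c1 : ContinuousOn (fun p : ℝ × ℝ => γ p.1) T :=
          hγcont.comp continuousOn_fst (fun p hp => hp.1)
        exact (c2.sub c1).norm
      obtain ⟨p₀, hp₀, hmin⟩ := hTcomp.exists_isMinOn hTne hcont
      rw [isMinOn_iff] at hmin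
      refine ⟨‖γ p₀.2 - γ p₀.1‖, ?_, fun s hs t ht hfar => hmin (s, t) ⟨hs, ht, hfar⟩⟩
      rw [gt_iff_lt, norm_sub_pos_iff]
      intro heq
      have hne : p₀.1 ≠ p₀.2 := by
        intro h
        have h3 := hp₀.2.2
        rw [h, sub_self, abs_zero] at h3
        have hpos : (0:ℝ) < 1 / (2 * K) := by positivity
        linarith
      exact hne (hγ_inj hp₀.1 hp₀.2.1 heq.symm)
  -- choose ε
  refine ⟨min (1 / (8 * K)) (m / 2), by positivity, fun s hs z hz hznorm => ?_⟩
  have hz8K : ‖z‖ < 1 / (8 * K) := lt_of_lt_of_le hznorm (min_le_left _ _)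
  have hzm : ‖z‖ < m / 2 := lt_of_lt_of_le hznorm (min_le_right _ _)
  have hmem : γ s ∈ S := hS ▸ Set.mem_image_of_mem γ hs
  refine le_antisymm ?_ ?_
  · calc Metric.infDist (γ s + z) S ≤ dist (γ s + z) (γ s) := infDist_le_dist_of_mem hmem
      _ = ‖z‖ := by rw [dist_eq_norm]; simp
  · rw [Metric.infDist_eq_iInf]
    have : Nonempty ↥S := ⟨⟨γ s, hmem⟩⟩
    apply le_ciInf
    rintro ⟨y, hy⟩
    rw [hS] at hy
    obtain ⟨t, ht, rfl⟩ := hy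
    have hdist : dist (γ s + z) (γ t) = ‖z - (γ t - γ s)‖ := by
      rw [dist_eq_norm]
      congr 1
      abel
    rw [hdist]
    by_cases hcase : |t - s| ≤ 1 / (2 * K)
    · -- nearby case
      have hinner : ⟪z, γ t - γ s⟫ ≤ ‖z‖ * (K * (t - s) ^ 2) := by
        have horth : ⟪z, (t - s) • γ' s⟫ = (0:ℝ) := by
          rw [real_inner_smul_right, hz, mul_zero]
        have hsplit : ⟪z, γ t - γ s⟫
            = ⟪z, γ t - γ s - (t - s) • γ' s⟫ + ⟪z, (t - s) • γ' s⟫ := by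
          rw [← inner_add_right]
          congr 1
          abel
        rw [hsplit, horth, add_zero]
        calc ⟪z, γ t - γ s - (t - s) • γ' s⟫
            ≤ ‖z‖ * ‖γ t - γ s - (t - s) • γ' s‖ := real_inner_le_norm _ _
          _ ≤ ‖z‖ * (K * (t - s) ^ 2) :=
            mul_le_mul_of_nonneg_left (hTay s hs t ht) (norm_nonneg z)
      have hvlow : |t - s| / 2 ≤ ‖γ t - γ s‖ := hlow s hs t ht hcase
      have hvsq : (t - s) ^ 2 / 4 ≤ ‖γ t - γ s‖ ^ 2 := by
        have h1 : (|t - s| / 2) ^ 2 ≤ ‖γ t - γ s‖ ^ 2 :=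
          pow_le_pow_left₀ (by positivity) hvlow 2
        have h2 : (|t - s| / 2) ^ 2 = (t - s) ^ 2 / 4 := by
          rw [div_pow, sq_abs]; norm_num
        linarith
      have hzK : ‖z‖ * K ≤ 1 / 8 := by
        have h := mul_le_mul_of_nonneg_right hz8K.le hKpos.le
        have heq : 1 / (8 * K) * K = 1 / 8 := by field_simp
        linarith [heq ▸ h]
      have hsq : ‖z‖ ^ 2 ≤ ‖z - (γ t - γ s)‖ ^ 2 := by
        rw [norm_sub_sq_real]
        nlinarith [hinner, hvsq, hzK, sq_nonneg (t - s)]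
      nlinarith [norm_nonneg (z - (γ t - γ s)), norm_nonneg z, hsq]
    · -- far case
      push_neg at hcase
      have hvm : m ≤ ‖γ t - γ s‖ := hm s hs t ht hcase.le
      have htri : ‖γ t - γ s‖ ≤ ‖z‖ + ‖z - (γ t - γ s)‖ := by
        calc ‖γ t - γ s‖ = ‖z - (z - (γ t - γ s))‖ := by congr 1; abel
          _ ≤ ‖z‖ + ‖z - (γ t - γ s)‖ := norm_sub_le _ _
      linarith
end

section
/- Let γ : ℝ → ℝ³ be a smooth (C^∞) curve, periodic with period L > 0, parametrized by arc length (‖γ'(s)‖ = 1 for all s), injective on [0, L), and let Σ = γ(ℝ). Then there exists ε > 0 such that every y ∈ ℝ³ with 0 < infDist(y, Σ) < ε admits a decomposition y = γ(s) + z with s ∈ [0, L), ⟨z, γ'(s)⟩ = 0 and ‖z‖ = infDist(y, Σ), and this decomposition is unique. (Lemma 1: the map (x, z) ↦ x + z is a bijection from the ε-normal bundle of a closed curve onto its tubular neighbourhood.) -/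
open MeasureTheory Topology Filter Metric Set Real
open scoped RealInnerProductSpace

section Aux
variable {E : Type*} [NormedAddCommGroup E] [InnerProductSpace ℝ E]

set_option linter.unusedSectionVars false

lemma tnc_periodic_deriv {f : ℝ → E} {c : ℝ} (h : Function.Periodic f c) :
    Function.Periodic (deriv f) c := fun x => by
  have hfc : (fun y => f (y + c)) = f := funext h
  rw [← deriv_comp_add_const, hfc]

lemma tnc_lip {f : ℝ → E} (hf : ContDiff ℝ (⊤ : ℕ∞) f) {C : ℝ}
    (hC : ∀ x, ‖deriv (deriv f) x‖ ≤ C) (a b : ℝ) :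
    ‖deriv f b - deriv f a‖ ≤ C * |b - a| := by
  have hf' : ContDiff ℝ ((⊤ : ℕ∞) : WithTop ℕ∞) f := hf.of_le (by simp)
  have hd : Differentiable ℝ (deriv f) :=
    ((contDiff_infty_iff_deriv.mp hf').2).differentiable (by simp)
  have := Convex.norm_image_sub_le_of_norm_deriv_le (f := deriv f) (s := univ)
    (fun x _ => hd.differentiableAt) (fun x _ => hC x) convex_univ (mem_univ a) (mem_univ b)
  simpa [Real.norm_eq_abs] using this

lemma tnc_taylor {f : ℝ → E} (hf : ContDiff ℝ (⊤ : ℕ∞) f) {C : ℝ}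
    (hC : ∀ x, ‖deriv (deriv f) x‖ ≤ C) (a b : ℝ) :
    ‖f b - f a - (b - a) • deriv f a‖ ≤ C * (b - a) ^ 2 := by
  have hd : Differentiable ℝ f := (contDiff_infty_iff_deriv.mp (hf.of_le (by simp))).1
  set g : ℝ → E := fun t => f t - t • deriv f a with hg
  have hgd : ∀ t : ℝ, HasDerivAt g (deriv f t - deriv f a) t := fun t => by
    have h2 : HasDerivAt (fun y : ℝ => y • deriv f a) (deriv f a) t := by
      simpa using (hasDerivAt_id t).smul_const (deriv f a)
    exact (hd t).hasDerivAt.sub h2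
  have key : ‖g b - g a‖ ≤ (C * |b - a|) * ‖b - a‖ := by
    apply Convex.norm_image_sub_le_of_norm_hasDerivWithin_le
      (f := g) (f' := fun t => deriv f t - deriv f a) (s := segment ℝ a b)
    · exact fun x _ => (hgd x).hasDerivWithinAt
    · intro x hx
      have h1 : ‖deriv f x - deriv f a‖ ≤ C * |x - a| := tnc_lip hf hC a x
      have h2 : |x - a| ≤ |b - a| := by
        rw [segment_eq_Icc', mem_Icc] at hx
        rcases le_total a b with hab | hab
        · rw [min_eq_left hab, max_eq_right hab] at hx
          rw [abs_of_nonneg (by linarith [hx.1] : (0:ℝ) ≤ x - a),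
            abs_of_nonneg (by linarith : (0:ℝ) ≤ b - a)]
          linarith [hx.2]
        · rw [min_eq_right hab, max_eq_left hab] at hx
          rw [abs_of_nonpos (by linarith [hx.2] : x - a ≤ 0),
            abs_of_nonpos (by linarith : b - a ≤ 0)]
          linarith [hx.1]
      have hC0 : 0 ≤ C := le_trans (norm_nonneg _) (hC 0)
      calc ‖deriv f x - deriv f a‖ ≤ C * |x - a| := h1
        _ ≤ C * |b - a| := by exact mul_le_mul_of_nonneg_left h2 hC0
    · exact convex_segment a b
    · exact left_mem_segment ℝ a b
    · exact right_mem_segment ℝ a b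
  have hgba : g b - g a = f b - f a - (b - a) • deriv f a := by
    simp only [hg]
    rw [sub_smul]
    abel
  rw [hgba] at key
  calc ‖f b - f a - (b - a) • deriv f a‖ ≤ (C * |b - a|) * ‖b - a‖ := key
    _ = C * (b - a) ^ 2 := by
        rw [Real.norm_eq_abs, sq]
        rw [mul_assoc, abs_mul_abs_self]

lemma tnc_key {f : ℝ → E} {C ε δ s t : ℝ} {z z' : E}
    (hT : ∀ a b : ℝ, ‖f b - f a - (b - a) • deriv f a‖ ≤ C * (b - a) ^ 2)
    (hLip : ∀ a b : ℝ, ‖deriv f b - deriv f a‖ ≤ C * |b - a|)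
    (hunit : ‖deriv f s‖ = 1)
    (hC0 : 0 ≤ C) (hCδ : C * δ ≤ 1 / 4) (hCε : C * ε ≤ 1 / 4)
    (hz : ⟪z, deriv f s⟫ = 0) (hz' : ⟪z', deriv f t⟫ = 0)
    (heq : f t - f s = z - z') (hz'ε : ‖z'‖ ≤ ε)
    (hts : |t - s| < δ) : t = s := by
  set u : ℝ := t - s with hu
  set R : E := f t - f s - u • deriv f s with hR
  have hRle : ‖R‖ ≤ C * u ^ 2 := hT s t
  have h1 : ⟪f t - f s, deriv f s⟫ = u + ⟪R, deriv f s⟫ := by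
    have : f t - f s = u • deriv f s + R := by rw [hR]; abel
    rw [this, inner_add_left, real_inner_smul_left, real_inner_self_eq_norm_sq, hunit]
    ring
  have h2 : ⟪f t - f s, deriv f s⟫ = -⟪z', deriv f s - deriv f t⟫ := by
    rw [heq, inner_sub_left, hz, inner_sub_right, hz']
    ring
  have hueq : u = -⟪z', deriv f s - deriv f t⟫ - ⟪R, deriv f s⟫ := by
    rw [← h2, h1]; ring
  have hb1 : |⟪z', deriv f s - deriv f t⟫| ≤ ε * (C * |u|) := by
    calc |⟪z', deriv f s - deriv f t⟫| ≤ ‖z'‖ * ‖deriv f s - deriv f t‖ :=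
          abs_real_inner_le_norm _ _
      _ ≤ ε * (C * |u|) := by
          apply mul_le_mul hz'ε _ (norm_nonneg _) (le_trans (norm_nonneg _) hz'ε)
          have hls := hLip t s
          rw [abs_sub_comm s t, ← hu] at hls
          exact hls
  have hb2 : |⟪R, deriv f s⟫| ≤ C * u ^ 2 := by
    calc |⟪R, deriv f s⟫| ≤ ‖R‖ * ‖deriv f s‖ := abs_real_inner_le_norm _ _
      _ = ‖R‖ := by rw [hunit, mul_one]
      _ ≤ C * u ^ 2 := hRle
  have habs : |u| ≤ ε * (C * |u|) + C * u ^ 2 := by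
    calc |u| = |(-⟪z', deriv f s - deriv f t⟫ - ⟪R, deriv f s⟫)| := by rw [← hueq]
      _ ≤ |⟪z', deriv f s - deriv f t⟫| + |⟪R, deriv f s⟫| := by
          rw [sub_eq_add_neg]
          refine le_trans (abs_add_le _ _) ?_
          simp [abs_neg]
      _ ≤ ε * (C * |u|) + C * u ^ 2 := add_le_add hb1 hb2
  -- ε * (C * |u|) = (C*ε)*|u| ≤ |u|/4 ; C*u^2 = (C*|u|)*|u| ≤ (C*δ)*|u| ≤ |u|/4
  have h3 : ε * (C * |u|) ≤ (1 / 4) * |u| := by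
    have : ε * (C * |u|) = (C * ε) * |u| := by ring
    rw [this]
    exact mul_le_mul_of_nonneg_right hCε (abs_nonneg _)
  have h4 : C * u ^ 2 ≤ (1 / 4) * |u| := by
    have h5 : C * u ^ 2 = (C * |u|) * |u| := by
      rw [sq, mul_assoc, abs_mul_abs_self]
    rw [h5]
    apply mul_le_mul_of_nonneg_right _ (abs_nonneg _)
    calc C * |u| ≤ C * δ := mul_le_mul_of_nonneg_left hts.le hC0
      _ ≤ 1 / 4 := hCδ
  clear_value u R
  have h6 : |u| ≤ (1 / 2) * |u| := by linarith [habs, h3, h4]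
  have hu0 : u = 0 := by
    have := abs_nonneg u
    have : |u| = 0 := by linarith
    exact abs_eq_zero.mp this
  have : t - s = 0 := by rw [← hu]; exact hu0
  linarith

lemma tnc_chord {L δ : ℝ} (hL : 0 < L) (hδ : 0 < δ) (hδL : δ ≤ L / 2)
    {γ : ℝ → E} (hcont : Continuous γ) (hγ_per : Function.Periodic γ L)
    (hγ_inj : Set.InjOn γ (Set.Ico 0 L)) :
    ∃ η > 0, ∀ a ∈ Icc 0 L, ∀ b ∈ Icc 0 L,
      ‖γ a - γ b‖ < η → |a - b| < δ ∨ L - δ < |a - b| := by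
  set K : Set (ℝ × ℝ) := {p | p.1 ∈ Icc 0 L ∧ p.2 ∈ Icc 0 L ∧ δ ≤ |p.1 - p.2| ∧
    |p.1 - p.2| ≤ L - δ} with hK
  have hKsub : K ⊆ Icc 0 L ×ˢ Icc 0 L := fun p hp => ⟨hp.1, hp.2.1⟩
  have habs_cont : Continuous fun p : ℝ × ℝ => |p.1 - p.2| :=
    (continuous_fst.sub continuous_snd).abs
  have hKclosed : IsClosed K := by
    have h1 : IsClosed {p : ℝ × ℝ | p.1 ∈ Icc 0 L} := isClosed_Icc.preimage continuous_fst
    have h2 : IsClosed {p : ℝ × ℝ | p.2 ∈ Icc 0 L} := isClosed_Icc.preimage continuous_snd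
    have h3 : IsClosed {p : ℝ × ℝ | δ ≤ |p.1 - p.2|} := isClosed_le continuous_const habs_cont
    have h4 : IsClosed {p : ℝ × ℝ | |p.1 - p.2| ≤ L - δ} := isClosed_le habs_cont continuous_const
    have : K = {p : ℝ × ℝ | p.1 ∈ Icc 0 L} ∩ ({p | p.2 ∈ Icc 0 L} ∩
        ({p | δ ≤ |p.1 - p.2|} ∩ {p | |p.1 - p.2| ≤ L - δ})) := by
      ext p; simp [hK, mem_inter_iff, and_assoc]
    rw [this]
    exact h1.inter (h2.inter (h3.inter h4))
  have hKcompact : IsCompact K :=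
    (isCompact_Icc.prod isCompact_Icc).of_isClosed_subset hKclosed hKsub
  have hKne : K.Nonempty := by
    refine ⟨(0, δ), ⟨?_, ?_, ?_, ?_⟩⟩
    · exact ⟨le_refl 0, hL.le⟩
    · exact ⟨hδ.le, by linarith⟩
    · simp [abs_of_nonpos, hδ.le, abs_of_nonneg]
    · rw [show |(0:ℝ) - δ| = δ by rw [zero_sub, abs_neg, abs_of_nonneg hδ.le]]
      linarith
  obtain ⟨p₀, hp₀K, hmin⟩ := hKcompact.exists_isMinOn hKne
    ((hcont.comp continuous_fst).sub (hcont.comp continuous_snd)).norm.continuousOn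
  set η : ℝ := ‖γ p₀.1 - γ p₀.2‖ with hη
  -- map a point of [0,L] into [0,L) with same value
  have hwrap : ∀ a ∈ Icc (0:ℝ) L, ∃ a', a' ∈ Ico (0:ℝ) L ∧ γ a' = γ a ∧ (a' = a ∨ (a = L ∧ a' = 0)) := by
    intro a ha
    by_cases h : a = L
    · refine ⟨0, ⟨le_refl 0, hL⟩, ?_, Or.inr ⟨h, rfl⟩⟩
      rw [h, show γ L = γ 0 from by simpa using hγ_per 0]
    · exact ⟨a, ⟨ha.1, lt_of_le_of_ne ha.2 h⟩, rfl, Or.inl rfl⟩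
  have hηpos : 0 < η := by
    rw [hη, norm_pos_iff, sub_ne_zero]
    intro hcontra
    obtain ⟨haK, hbK, hd1, hd2⟩ := hp₀K
    obtain ⟨a', ha'I, ha'v, ha'c⟩ := hwrap p₀.1 haK
    obtain ⟨b', hb'I, hb'v, hb'c⟩ := hwrap p₀.2 hbK
    have : a' = b' := hγ_inj ha'I hb'I (by rw [ha'v, hb'v, hcontra])
    rcases ha'c with h1 | ⟨h1, h1'⟩ <;> rcases hb'c with h2 | ⟨h2, h2'⟩
    · rw [h1, h2] at this; rw [this] at hd1; simp at hd1; linarith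
    · rw [h1, h2'] at this; rw [this, h2] at hd2
      rw [zero_sub, abs_neg, abs_of_nonneg hL.le] at hd2; linarith
    · rw [h2, h1'] at this; rw [← this, h1] at hd2
      rw [abs_of_nonneg (by linarith : (0:ℝ) ≤ L - 0)] at hd2; linarith
    · rw [h1, h2] at hd1; simp at hd1; linarith
  refine ⟨η, hηpos, fun a ha b hb hlt => ?_⟩
  by_contra hcon
  push_neg at hcon
  have hmem : (a, b) ∈ K := ⟨ha, hb, hcon.1, hcon.2⟩
  have := hmin hmem
  simp only [IsMinOn, IsMinFilter] at this
  have : η ≤ ‖γ a - γ b‖ := hmin hmem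
  linarith

end Aux

/-- **Lemma 1 for closed curves.** Let `γ : ℝ → ℝ³` be a smooth closed curve of period
`L`, parametrized by arc length and injective on `[0,L)`, with image `Σ`. Then there is
`ε > 0` such that every point `y` with `0 < dist(y,Σ) < ε` has a unique decomposition
`y = γ(s) + z` with `s ∈ [0,L)`, `z` normal to the curve at `γ(s)` and
`‖z‖ = dist(y,Σ)`. -/
theorem tubular_neighbourhood_closed_curve
    (L : ℝ) (hL : 0 < L)
    (γ : ℝ → EuclideanSpace ℝ (Fin 3))
    (hγ_smooth : ContDiff ℝ (⊤ : ℕ∞) γ)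
    (hγ_per : Function.Periodic γ L)
    (hγ_inj : Set.InjOn γ (Set.Ico 0 L))
    (hγ_arc : ∀ s : ℝ, ‖deriv γ s‖ = 1)
    (S : Set (EuclideanSpace ℝ (Fin 3))) (hS : S = Set.range γ) :
    ∃ ε > 0, ∀ y : EuclideanSpace ℝ (Fin 3),
      0 < Metric.infDist y S → Metric.infDist y S < ε →
      ∃! sz : ℝ × EuclideanSpace ℝ (Fin 3),
        sz.1 ∈ Set.Ico 0 L ∧ ⟪sz.2, deriv γ sz.1⟫ = 0 ∧
        ‖sz.2‖ = Metric.infDist y S ∧ y = γ sz.1 + sz.2 := by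
  subst hS
  have hdiff : Differentiable ℝ γ := (hγ_smooth.of_le (by simp) :
    ContDiff ℝ ((⊤ : ℕ∞) : WithTop ℕ∞) γ).differentiable (by simp)
  have hcont : Continuous γ := hγ_smooth.continuous
  -- second derivative bound
  have hd1 := contDiff_infty_iff_deriv.mp (hγ_smooth.of_le (by simp))
  have hd2 := contDiff_infty_iff_deriv.mp hd1.2
  have hcont2 : Continuous (deriv (deriv γ)) := hd2.2.continuous
  obtain ⟨C₀, hC₀⟩ := (isCompact_Icc (a := (0:ℝ)) (b := L)).exists_bound_of_continuousOn
    hcont2.continuousOn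
  set C : ℝ := max C₀ 1 with hCdef
  have hC1 : (1:ℝ) ≤ C := le_max_right _ _
  have hC0 : (0:ℝ) ≤ C := by linarith
  have hCpos : (0:ℝ) < C := by linarith
  have hper2 : Function.Periodic (deriv (deriv γ)) L :=
    tnc_periodic_deriv (tnc_periodic_deriv hγ_per)
  have hC : ∀ x : ℝ, ‖deriv (deriv γ) x‖ ≤ C := by
    intro x
    obtain ⟨w, hwI, hwv⟩ := hper2.exists_mem_Ico₀ hL x
    rw [hwv]
    exact le_trans (hC₀ w (Ico_subset_Icc_self hwI)) (le_max_left _ _)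
  have hT := fun a b => tnc_taylor hγ_smooth hC a b
  have hLip := fun a b => tnc_lip hγ_smooth hC a b
  -- constants
  set δ : ℝ := min (L / 2) (1 / (4 * C)) with hδdef
  have hδpos : 0 < δ := lt_min (by linarith) (by positivity)
  have hδL : δ ≤ L / 2 := min_le_left _ _
  have hCδ : C * δ ≤ 1 / 4 := by
    calc C * δ ≤ C * (1 / (4 * C)) := mul_le_mul_of_nonneg_left (min_le_right _ _) hC0
      _ = 1 / 4 := by field_simp
  obtain ⟨η, hηpos, hchord⟩ := tnc_chord hL hδpos hδL hcont hγ_per hγ_inj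
  set ε : ℝ := min (η / 2) (1 / (4 * C)) with hεdef
  have hεpos : 0 < ε := lt_min (by linarith) (by positivity)
  have hCε : C * ε ≤ 1 / 4 := by
    calc C * ε ≤ C * (1 / (4 * C)) := mul_le_mul_of_nonneg_left (min_le_right _ _) hC0
      _ = 1 / 4 := by field_simp
  have hεη : ε ≤ η / 2 := min_le_left _ _
  refine ⟨ε, hεpos, fun y hd0 hdε => ?_⟩
  set d : ℝ := Metric.infDist y (Set.range γ) with hddef
  -- uniqueness of the parameter for any two decompositions
  have huniq : ∀ s s' : ℝ, ∀ z z' : EuclideanSpace ℝ (Fin 3),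
      s ∈ Ico 0 L → s' ∈ Ico 0 L →
      ⟪z, deriv γ s⟫ = 0 → ⟪z', deriv γ s'⟫ = 0 →
      ‖z‖ = d → ‖z'‖ = d → y = γ s + z → y = γ s' + z' → s = s' := by
    intro s s' z z' hsI hs'I hz hz' hnz hnz' hy hy'
    have h : γ s + z = γ s' + z' := by rw [← hy, ← hy']
    have hzz : γ s' - γ s = z - z' := by
      calc γ s' - γ s = (γ s' + z') - z' - γ s := by abel
        _ = (γ s + z) - z' - γ s := by rw [h]
        _ = z - z' := by abel
    have hsmall : ‖γ s - γ s'‖ < η := by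
      have : γ s - γ s' = z' - z := by
        rw [show γ s - γ s' = -(γ s' - γ s) by abel, hzz]; abel
      rw [this]
      calc ‖z' - z‖ ≤ ‖z'‖ + ‖z‖ := norm_sub_le _ _
        _ = d + d := by rw [hnz, hnz']
        _ < ε + ε := by linarith
        _ ≤ η := by linarith
    rcases hchord s (Ico_subset_Icc_self hsI) s' (Ico_subset_Icc_self hs'I) hsmall with
      hcase | hcase
    · -- |s - s'| < δ : direct application of the key lemma
      have := tnc_key hT hLip (hγ_arc s) hC0 hCδ hCε hz hz' hzz
        (by rw [hnz']; linarith) (by rw [abs_sub_comm]; exact hcase)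
      exact this.symm
    · -- wrap-around case: contradiction
      exfalso
      have hsne : s ≠ s' := by
        intro hss
        rw [hss] at hcase
        simp at hcase
        linarith
      rcases lt_or_gt_of_ne hsne with hlt | hgt
      · -- s < s' : use t = s' - L
        set t : ℝ := s' - L with htdef
        have hγt : γ t = γ s' := by
          have := hγ_per t
          rw [htdef] at this ⊢
          rw [← this, sub_add_cancel]
        have hγ't : deriv γ t = deriv γ s' := by
          have := tnc_periodic_deriv hγ_per t
          rw [htdef] at this ⊢
          rw [← this, sub_add_cancel]
        have habs : |s - s'| = s' - s := by rw [abs_sub_comm, abs_of_nonneg (by linarith)]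
        have hts : |t - s| < δ := by
          rw [htdef, abs_lt]
          constructor
          · rw [habs] at hcase; linarith
          · have : s' < L := hs'I.2
            have : 0 ≤ s := hsI.1
            linarith [hs'I.2, hsI.1]
        have hkey := tnc_key hT hLip (hγ_arc s) hC0 hCδ hCε hz
          (by rw [hγ't]; exact hz') (by rw [hγt]; exact hzz)
          (by rw [hnz']; linarith) hts
        rw [htdef] at hkey
        have : s' = s + L := by linarith
        linarith [hs'I.2, hsI.1]
      · -- s' < s : use t = s' + L
        set t : ℝ := s' + L with htdef
        have hγt : γ t = γ s' := hγ_per s'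
        have hγ't : deriv γ t = deriv γ s' := tnc_periodic_deriv hγ_per s'
        have habs : |s - s'| = s - s' := abs_of_nonneg (by linarith)
        have hts : |t - s| < δ := by
          rw [htdef, abs_lt]
          constructor
          · linarith [hsI.2, hs'I.1, hδpos]
          · rw [habs] at hcase; linarith
        have hkey := tnc_key hT hLip (hγ_arc s) hC0 hCδ hCε hz
          (by rw [hγ't]; exact hz') (by rw [hγt]; exact hzz)
          (by rw [hnz']; linarith) hts
        rw [htdef] at hkey
        linarith [hsI.2, hs'I.1]
  -- existence of a decomposition
  have hrange : Set.range γ = γ '' Icc 0 L := by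
    apply Subset.antisymm
    · rintro x ⟨r, rfl⟩
      obtain ⟨w, hwI, hwv⟩ := hγ_per.exists_mem_Ico₀ hL r
      exact ⟨w, Ico_subset_Icc_self hwI, hwv.symm⟩
    · rintro x ⟨r, _, rfl⟩
      exact mem_range_self r
  have hScompact : IsCompact (Set.range γ) := by
    rw [hrange]; exact isCompact_Icc.image hcont
  have hSne : (Set.range γ).Nonempty := range_nonempty γ
  obtain ⟨p, hpS, hpd⟩ := hScompact.exists_infDist_eq_dist hSne y
  obtain ⟨t₀, rfl⟩ := hpS
  obtain ⟨s₀, hs₀I, hs₀v⟩ := hγ_per.exists_mem_Ico₀ hL t₀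
  have hps : dist y (γ s₀) = d := by rw [← hs₀v, ← hpd]
  have hmin : ∀ r : ℝ, dist y (γ s₀) ≤ dist y (γ r) := by
    intro r
    rw [hps]
    exact Metric.infDist_le_dist_of_mem (mem_range_self r)
  -- orthogonality at the minimizer
  have horth : ⟪y - γ s₀, deriv γ s₀⟫ = 0 := by
    have hderivfun : HasDerivAt (fun t => y - γ t) (-(deriv γ s₀)) s₀ :=
      ((hdiff s₀).hasDerivAt).const_sub y
    have hfd : HasDerivAt (fun t : ℝ => ⟪y - γ t, y - γ t⟫)
        (⟪y - γ s₀, -(deriv γ s₀)⟫ + ⟪-(deriv γ s₀), y - γ s₀⟫) s₀ :=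
      HasDerivAt.inner ℝ hderivfun hderivfun
    have hlocmin : IsLocalMin (fun t : ℝ => ⟪y - γ t, y - γ t⟫) s₀ := by
      apply Filter.Eventually.of_forall
      intro t
      simp only [real_inner_self_eq_norm_sq]
      apply pow_le_pow_left₀ (norm_nonneg _)
      rw [← dist_eq_norm, ← dist_eq_norm]
      exact hmin t
    have hD := hlocmin.hasDerivAt_eq_zero hfd
    rw [inner_neg_right, inner_neg_left] at hD
    have hcomm := real_inner_comm (y - γ s₀) (deriv γ s₀)
    linarith [hD, hcomm]
  refine ⟨(s₀, y - γ s₀), ⟨hs₀I, horth, ?_, by simp⟩, ?_⟩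
  · rw [← dist_eq_norm, hps]
  · rintro ⟨s, z⟩ ⟨hsI, hz, hnz, hy⟩
    have hnz₀ : ‖y - γ s₀‖ = d := by rw [← dist_eq_norm, hps]
    have hss : s = s₀ := huniq s s₀ z (y - γ s₀) hsI hs₀I hz horth hnz hnz₀ hy (by simp)
    have hzz : z = y - γ s₀ := by
      rw [← hss]
      have : y = γ s + z := hy
      rw [this]; abel
    exact Prod.ext hss hzz
end
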